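/- Let A_0 be a positively graded ℂ-algebra and let A be a graded deformation of A_0 over ℂ[t] with t in degree 1; that is, A is a graded ℂ[t]-algebra, flat (equivalently, torsion-free) as a ℂ[t]-module, with a graded algebra isomorphism A/tA ≅ A_0. Then A/(t−1)A is a filtered algebra whose associated graded algebra is isomorphic to A_0. -/

import Mathlib

/-!
Write `Fₙ A = ⨁_{i ≤ n} Aᵢ`. The principal symbol `a ↦ p(aₙ)` maps `Fₙ A` onto `(A₀)ₙ`
multiplicatively, and the point is that its kernel is exactly the preimage of `Fₙ₋₁ B`.
If `p(aₙ) = 0` then `aₙ = t c`, and `t c ≡ c` modulo `t − 1` has lower degree. Conversely,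
since `t` is a non-zero-divisor (flatness), `(t − 1) c ∈ Fₙ A` forces `c ∈ Fₙ₋₁ A`: otherwise
`t` times the top component of `c` would survive one degree higher. So if `π a ∈ Fₙ₋₁ B`, i.e.
`a = a' + (t − 1) c` with `a' ∈ Fₙ₋₁ A`, then `aₙ = t cₙ₋₁ ∈ ker p`.
-/

/-- The filtration `Fₙ B = ⨆_{i ≤ n} π(Aᵢ)` on `B = A/(t−1)A` induced by the grading
of `A` via the quotient map `π`. -/
noncomputable def filtDeg {A B : Type} [Ring A] [Algebra ℂ A] [Ring B] [Algebra ℂ B]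
    (𝒜 : ℤ → Submodule ℂ A) (π : A →ₐ[ℂ] B) (n : ℤ) : Submodule ℂ B :=
  ⨆ i : ℤ, ⨆ _ : i ≤ n, Submodule.map π.toLinearMap (𝒜 i)

open DirectSum

theorem Submodule.exists_quotientEquiv_of_comap_eq_ker {R M N P : Type*} [Ring R]
    [AddCommGroup M] [Module R M] [AddCommGroup N] [Module R N] [AddCommGroup P] [Module R P]
    {f : M →ₗ[R] N} {g : M →ₗ[R] P} (hf : Function.Surjective f) (hg : Function.Surjective g)
    {N' : Submodule R N} (h : N'.comap f = LinearMap.ker g) :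
    ∃ e : (N ⧸ N') ≃ₗ[R] P, ∀ m, e (Submodule.Quotient.mk (f m)) = g m := by
  have hker : LinearMap.ker (N'.mkQ ∘ₗ f) = LinearMap.ker g := by
    rw [LinearMap.ker_comp, Submodule.ker_mkQ, h]
  have hsurj : Function.Surjective (N'.mkQ ∘ₗ f) := N'.mkQ_surjective.comp hf
  refine ⟨((N'.mkQ ∘ₗ f).quotKerEquivOfSurjective hsurj).symm ≪≫ₗ
    Submodule.quotEquivOfEq _ _ hker ≪≫ₗ g.quotKerEquivOfSurjective hg, fun m => ?_⟩
  have hmk : ((N'.mkQ ∘ₗ f).quotKerEquivOfSurjective hsurj).symm (Submodule.Quotient.mk (f m)) =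
      Submodule.Quotient.mk m :=
    (LinearEquiv.symm_apply_eq _).2 (LinearMap.quotKerEquivOfSurjective_apply_mk _ hsurj m).symm
  rw [LinearEquiv.trans_apply, LinearEquiv.trans_apply, hmk, Submodule.quotEquivOfEq_mk,
    LinearMap.quotKerEquivOfSurjective_apply_mk]

namespace GradedAlgebra

section Filtration

variable {R A : Type*} [CommRing R] [Ring A] [Algebra R A] (𝒜 : ℤ → Submodule R A)

def filtration (n : ℤ) : Submodule R A := ⨆ i ≤ n, 𝒜 i

variable {𝒜}

theorem mem_filtration_of_mem {i n : ℤ} (h : i ≤ n) {a : A} (ha : a ∈ 𝒜 i) :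
    a ∈ filtration 𝒜 n :=
  le_iSup₂_of_le (f := fun i (_ : i ≤ n) => 𝒜 i) i h le_rfl ha

theorem filtration_mono {m n : ℤ} (h : m ≤ n) : filtration 𝒜 m ≤ filtration 𝒜 n :=
  biSup_mono fun _ hi => hi.trans h

theorem mul_mem_filtration [SetLike.GradedMonoid 𝒜] {m n : ℤ} {a b : A}
    (ha : a ∈ filtration 𝒜 m) (hb : b ∈ filtration 𝒜 n) : a * b ∈ filtration 𝒜 (m + n) := by
  have : filtration 𝒜 m * filtration 𝒜 n ≤ filtration 𝒜 (m + n) := by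
    simp only [filtration, Submodule.iSup_mul, Submodule.mul_iSup, iSup_le_iff]
    intro j hj i hi
    exact Submodule.mul_le.2 fun x hx y hy =>
      mem_filtration_of_mem (add_le_add hi hj) (SetLike.mul_mem_graded hx hy)
  exact this (Submodule.mul_mem_mul ha hb)

variable [GradedAlgebra 𝒜]

theorem mem_filtration_iff {n : ℤ} {a : A} :
    a ∈ filtration 𝒜 n ↔ ∀ j, n < j → (decompose 𝒜 a j : A) = 0 := by
  classical
  constructor
  · have : filtration 𝒜 n ≤ ⨅ j, ⨅ _ : n < j, LinearMap.ker (proj 𝒜 j) :=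
      iSup₂_le fun i hi => le_iInf₂ fun j hj _ hx => decompose_of_mem_ne 𝒜 hx (by omega)
    intro ha j hj
    have := this ha
    simp only [Submodule.mem_iInf, LinearMap.mem_ker, proj_apply] at this
    exact this j hj
  · intro h
    rw [← sum_support_decompose 𝒜 a]
    refine Submodule.sum_mem _ fun j _ => ?_
    rcases le_or_gt j n with hjn | hjn
    · exact mem_filtration_of_mem hjn (decompose 𝒜 a j).2
    · simp [h j hjn]

variable (𝒜) in
theorem exists_mem_filtration (a : A) : ∃ n, a ∈ filtration 𝒜 n := by
  classical
  obtain ⟨n, hn⟩ := (DFinsupp.support (decompose 𝒜 a)).exists_le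
  refine ⟨n, mem_filtration_iff.2 fun j hj => ?_⟩
  have : j ∉ DFinsupp.support (decompose 𝒜 a) := fun hmem => (hn j hmem).not_gt hj
  simp [DFinsupp.notMem_support_iff.1 this]

theorem mem_filtration_sub_one {n : ℤ} {a : A} (ha : a ∈ filtration 𝒜 n)
    (han : (decompose 𝒜 a n : A) = 0) : a ∈ filtration 𝒜 (n - 1) := by
  rw [mem_filtration_iff] at ha ⊢
  intro j hj
  rcases (show n ≤ j by omega).eq_or_lt with rfl | h
  exacts [han, ha j h]

theorem sub_decompose_mem_filtration {n : ℤ} {a : A} (ha : a ∈ filtration 𝒜 n) :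
    a - decompose 𝒜 a n ∈ filtration 𝒜 (n - 1) := by
  refine mem_filtration_sub_one
    (sub_mem ha (mem_filtration_of_mem le_rfl (decompose 𝒜 a n).2)) ?_
  rw [decompose_sub, DirectSum.sub_apply, decompose_coe, of_eq_same, sub_self,
    ZeroMemClass.coe_zero]

theorem coe_decompose_mul_of_mem_filtration {m n : ℤ} {a b : A} (ha : a ∈ filtration 𝒜 m)
    (hb : b ∈ filtration 𝒜 n) :
    (decompose 𝒜 (a * b) (m + n) : A) = decompose 𝒜 a m * decompose 𝒜 b n := by
  set am := (decompose 𝒜 a m : A)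
  set bn := (decompose 𝒜 b n : A)
  have hlow : (a - am) * b + am * (b - bn) ∈ filtration 𝒜 (m + n - 1) := by
    refine add_mem ?_ ?_
    · simpa [sub_add_eq_add_sub] using mul_mem_filtration (sub_decompose_mem_filtration ha) hb
    · simpa [add_sub_assoc] using mul_mem_filtration
        (mem_filtration_of_mem le_rfl (decompose 𝒜 a m).2) (sub_decompose_mem_filtration hb)
  rw [show a * b = ((a - am) * b + am * (b - bn)) + am * bn by noncomm_ring, decompose_add,
    DirectSum.add_apply, Submodule.coe_add, mem_filtration_iff.1 hlow _ (by omega), zero_add,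
    decompose_of_mem_same 𝒜 (SetLike.mul_mem_graded (decompose 𝒜 a m).2 (decompose 𝒜 b n).2)]

theorem coe_decompose_sub_one_mul {t : A} (ht : t ∈ 𝒜 1) (c : A) (k : ℤ) :
    (decompose 𝒜 ((t - 1) * c) (k + 1) : A) = t * decompose 𝒜 c k - decompose 𝒜 c (k + 1) := by
  rw [sub_one_mul, decompose_sub, DirectSum.sub_apply, Submodule.coe_sub, add_comm k 1,
    coe_decompose_mul_add_of_left_mem 𝒜 ht]

theorem mem_filtration_sub_one_of_sub_one_mul_mem {t : A} (ht : t ∈ 𝒜 1)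
    (hreg : IsLeftRegular t) {n : ℤ} {c : A} (h : (t - 1) * c ∈ filtration 𝒜 n) :
    c ∈ filtration 𝒜 (n - 1) := by
  have step (k : ℤ) (hk : n ≤ k) (hc : c ∈ filtration 𝒜 k) : c ∈ filtration 𝒜 (k - 1) := by
    refine mem_filtration_sub_one hc (hreg (?_ : t * _ = t * 0))
    have := coe_decompose_sub_one_mul ht c k
    rw [mem_filtration_iff.1 h (k + 1) (by omega), mem_filtration_iff.1 hc (k + 1) (by omega),
      sub_zero] at this
    rw [mul_zero, this]
  obtain ⟨K, hK⟩ := exists_mem_filtration 𝒜 c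
  exact Int.leInductionDown (m := max K (n - 1))
    (motive := fun k _ => n - 1 ≤ k → c ∈ filtration 𝒜 k)
    (fun _ => filtration_mono (le_max_left _ _) hK)
    (fun k _ ih hk => step k (by omega) (ih (by omega))) (n - 1) (le_max_right _ _) le_rfl

end Filtration

section Deformation

variable {R A A₀ B : Type*} [CommRing R] [Ring A] [Algebra R A] [Ring A₀] [Algebra R A₀]
  [Ring B] [Algebra R B] {𝒜 : ℤ → Submodule R A} [GradedAlgebra 𝒜] {𝒜₀ : ℤ → Submodule R A₀}
  {p : A →ₐ[R] A₀} {π : A →ₐ[R] B} {t : A}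

variable (𝒜 p) in
def principalSymbol (hgr : ∀ i, (𝒜 i).map p.toLinearMap = 𝒜₀ i) (n : ℤ) :
    filtration 𝒜 n →ₗ[R] 𝒜₀ n :=
  ((p.toLinearMap ∘ₗ proj 𝒜 n).codRestrict (𝒜₀ n) fun a => by
      rw [← hgr n]; exact Submodule.mem_map_of_mem (decompose 𝒜 a n).2) ∘ₗ
    (filtration 𝒜 n).subtype

section Symbol

variable (hgr : ∀ i, (𝒜 i).map p.toLinearMap = 𝒜₀ i)

theorem coe_principalSymbol_apply {n : ℤ} (a : filtration 𝒜 n) :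
    (principalSymbol 𝒜 p hgr n a : A₀) = p (decompose 𝒜 (a : A) n) :=
  rfl

theorem principalSymbol_surjective (n : ℤ) : Function.Surjective (principalSymbol 𝒜 p hgr n) := by
  intro x
  obtain ⟨a, ha, hpa⟩ : (x : A₀) ∈ (𝒜 n).map p.toLinearMap := (hgr n).symm ▸ x.2
  refine ⟨⟨a, mem_filtration_of_mem le_rfl ha⟩, Subtype.ext ?_⟩
  rw [coe_principalSymbol_apply, decompose_of_mem_same 𝒜 ha]
  exact hpa

theorem principalSymbol_mul {m n : ℤ} (a : filtration 𝒜 m) (b : filtration 𝒜 n) :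
    (principalSymbol 𝒜 p hgr (m + n) ⟨a * b, mul_mem_filtration a.2 b.2⟩ : A₀) =
      principalSymbol 𝒜 p hgr m a * principalSymbol 𝒜 p hgr n b := by
  simp only [coe_principalSymbol_apply, coe_decompose_mul_of_mem_filtration a.2 b.2, map_mul]

end Symbol

theorem map_decompose_eq_zero_of_map_mem (ht : t ∈ 𝒜 1) (hreg : IsLeftRegular t) (hpt : p t = 0)
    (hkerπ : ∀ a, π a = 0 → ∃ c, a = (t - 1) * c) {n : ℤ} {a : A} (ha : a ∈ filtration 𝒜 n)
    (hπa : π a ∈ (filtration 𝒜 (n - 1)).map π.toLinearMap) :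
    p (decompose 𝒜 a n) = 0 := by
  obtain ⟨a', ha', hπa'⟩ := hπa
  obtain ⟨c, hc⟩ := hkerπ (a - a') (by rw [map_sub, ← hπa', AlgHom.toLinearMap_apply, sub_self])
  have hc' : c ∈ filtration 𝒜 (n - 1) := mem_filtration_sub_one_of_sub_one_mul_mem ht hreg
    (hc ▸ sub_mem ha (filtration_mono (by omega) ha'))
  have han : (decompose 𝒜 a n : A) = t * decompose 𝒜 c (n - 1) := by
    have := coe_decompose_sub_one_mul ht c (n - 1)
    rw [sub_add_cancel, ← hc, decompose_sub, DirectSum.sub_apply, Submodule.coe_sub,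
      mem_filtration_iff.1 ha' n (by omega), mem_filtration_iff.1 hc' n (by omega),
      sub_zero, sub_zero] at this
    exact this
  rw [han, map_mul, hpt, zero_mul]

theorem map_mem_of_map_decompose_eq_zero (ht : t ∈ 𝒜 1) (hkerp : ∀ a, p a = 0 → ∃ c, a = t * c)
    (hkerπ : ∀ c, π ((t - 1) * c) = 0) {n : ℤ} {a : A} (ha : a ∈ filtration 𝒜 n)
    (h : p (decompose 𝒜 a n) = 0) :
    π a ∈ (filtration 𝒜 (n - 1)).map π.toLinearMap := by
  obtain ⟨c, hc⟩ := hkerp _ h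
  set c' := (decompose 𝒜 c (n - 1) : A)
  have han : (decompose 𝒜 a n : A) = t * c' := by
    rw [← coe_decompose_mul_add_of_left_mem 𝒜 ht, add_sub_cancel, ← hc,
      decompose_of_mem_same 𝒜 (decompose 𝒜 a n).2]
  have hπa : π a = π (a - decompose 𝒜 a n) + π c' := calc
    π a = π (a - decompose 𝒜 a n) + π (t * c') := by rw [← han, ← map_add, sub_add_cancel]
    _ = π (a - decompose 𝒜 a n) + π c' := by
      rw [show t * c' = (t - 1) * c' + c' by noncomm_ring, map_add, hkerπ, zero_add]
  rw [hπa]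
  exact add_mem (Submodule.mem_map_of_mem (sub_decompose_mem_filtration ha))
    (Submodule.mem_map_of_mem (mem_filtration_of_mem le_rfl (decompose 𝒜 c (n - 1)).2))

theorem comap_map_filtration_sub_one_eq_ker_principalSymbol (ht : t ∈ 𝒜 1)
    (hreg : IsLeftRegular t) (hkerp : ∀ a, p a = 0 ↔ ∃ c, a = t * c)
    (hgr : ∀ i, (𝒜 i).map p.toLinearMap = 𝒜₀ i)
    (hkerπ : ∀ a, π a = 0 ↔ ∃ c, a = (t - 1) * c) (n : ℤ) :
    (((filtration 𝒜 (n - 1)).map π.toLinearMap).comap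
        ((filtration 𝒜 n).map π.toLinearMap).subtype).comap
      (π.toLinearMap.submoduleMap (filtration 𝒜 n)) =
      LinearMap.ker (principalSymbol 𝒜 p hgr n) := by
  ext a
  rw [Submodule.mem_comap, Submodule.mem_comap, LinearMap.mem_ker, ← Subtype.coe_inj,
    coe_principalSymbol_apply, ZeroMemClass.coe_zero]
  exact ⟨map_decompose_eq_zero_of_map_mem ht hreg ((hkerp t).2 ⟨1, (mul_one t).symm⟩)
      (fun a => (hkerπ a).1) a.2,
    map_mem_of_map_decompose_eq_zero ht (fun a => (hkerp a).1) (fun c => (hkerπ _).2 ⟨c, rfl⟩)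
      a.2⟩

theorem exists_linearEquiv_gradedPiece_of_deformation (ht : t ∈ 𝒜 1)
    (hreg : IsLeftRegular t) (hkerp : ∀ a, p a = 0 ↔ ∃ c, a = t * c)
    (hgr : ∀ i, (𝒜 i).map p.toLinearMap = 𝒜₀ i)
    (hkerπ : ∀ a, π a = 0 ↔ ∃ c, a = (t - 1) * c) :
    ∃ e : ∀ n : ℤ, ((filtration 𝒜 n).map π.toLinearMap ⧸
        ((filtration 𝒜 (n - 1)).map π.toLinearMap).comap
          ((filtration 𝒜 n).map π.toLinearMap).subtype) ≃ₗ[R] 𝒜₀ n,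
      ∀ (m n : ℤ) (x : (filtration 𝒜 m).map π.toLinearMap)
        (y : (filtration 𝒜 n).map π.toLinearMap)
        (hxy : (x : B) * (y : B) ∈ (filtration 𝒜 (m + n)).map π.toLinearMap),
        (e (m + n) (Submodule.Quotient.mk ⟨(x : B) * (y : B), hxy⟩) : A₀) =
          (e m (Submodule.Quotient.mk x) : A₀) * (e n (Submodule.Quotient.mk y) : A₀) := by
  choose e he using fun n => Submodule.exists_quotientEquiv_of_comap_eq_ker
    (LinearMap.submoduleMap_surjective _ _) (principalSymbol_surjective hgr n)
    (comap_map_filtration_sub_one_eq_ker_principalSymbol ht hreg hkerp hgr hkerπ n)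
  refine ⟨e, fun m n x y hxy => ?_⟩
  obtain ⟨a, rfl⟩ := LinearMap.submoduleMap_surjective π.toLinearMap _ x
  obtain ⟨b, rfl⟩ := LinearMap.submoduleMap_surjective π.toLinearMap _ y
  have hab : (⟨_, hxy⟩ : (filtration 𝒜 (m + n)).map π.toLinearMap) =
      π.toLinearMap.submoduleMap _ ⟨(a : A) * b, mul_mem_filtration a.2 b.2⟩ :=
    Subtype.ext (map_mul π (a : A) b).symm
  rw [hab, he, he, he, principalSymbol_mul]

end Deformation

end GradedAlgebra

theorem stmt6_general {A₀ A B : Type} [Ring A₀] [Algebra ℂ A₀] [Ring A] [Algebra ℂ A]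
    [Ring B] [Algebra ℂ B]
    [Algebra (Polynomial ℂ) A]
    (𝒜₀ : ℤ → Submodule ℂ A₀)
    (𝒜 : ℤ → Submodule ℂ A) [GradedAlgebra 𝒜]
    (ht : algebraMap (Polynomial ℂ) A Polynomial.X ∈ 𝒜 1)
    (hflat : Module.Flat (Polynomial ℂ) A)
    (p : A →ₐ[ℂ] A₀)
    (hkerp : ∀ a : A, p a = 0 ↔
      ∃ c : A, a = algebraMap (Polynomial ℂ) A Polynomial.X * c)
    (hgr : ∀ i : ℤ, Submodule.map p.toLinearMap (𝒜 i) = 𝒜₀ i)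
    (π : A →ₐ[ℂ] B)
    (hkerπ : ∀ a : A, π a = 0 ↔
      ∃ c : A, a = (algebraMap (Polynomial ℂ) A Polynomial.X - 1) * c) :
    ∃ e : ∀ n : ℤ,
        ((filtDeg 𝒜 π n) ⧸
          ((filtDeg 𝒜 π (n - 1)).comap (filtDeg 𝒜 π n).subtype)) ≃ₗ[ℂ] 𝒜₀ n,
      ∀ (m n : ℤ) (x : filtDeg 𝒜 π m) (y : filtDeg 𝒜 π n)
        (hxy : (x : B) * (y : B) ∈ filtDeg 𝒜 π (m + n)),
        (e (m + n) (Submodule.Quotient.mk ⟨(x : B) * (y : B), hxy⟩) : A₀) =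
          (e m (Submodule.Quotient.mk x) : A₀) * (e n (Submodule.Quotient.mk y) : A₀) := by
  have hreg : IsLeftRegular (algebraMap (Polynomial ℂ) A Polynomial.X) := fun x y hxy =>
    Module.Flat.isSMulRegular_of_isRegular (M := A) (Polynomial.isRegular_X (R := ℂ))
      (by simpa only [Algebra.smul_def] using hxy)
  have hfilt : filtDeg 𝒜 π = fun n => (GradedAlgebra.filtration 𝒜 n).map π.toLinearMap :=
    funext fun n => by simp only [filtDeg, GradedAlgebra.filtration, Submodule.map_iSup]
  rw [hfilt]
  exact GradedAlgebra.exists_linearEquiv_gradedPiece_of_deformation ht hreg hkerp hgr hkerπ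

/-- **Braverman–Gaitsgory.** Let `A₀` be a positively graded
`ℂ`-algebra and `A` a graded deformation of `A₀` over `ℂ[t]` (`t` in degree `1`):
`A` is a `ℤ`-graded `ℂ[t]`-algebra with `t ∈ A₁`, flat over `ℂ[t]`, together with a
graded surjection `p : A → A₀` with kernel `tA` (so `A/tA ≅ A₀` as graded algebras).
Then `B := A/(t−1)A` (presented by a surjection `π : A → B` with kernel `(t−1)A`) is
a filtered algebra, with filtration `Fₙ B = image of ⊕_{i≤n} Aᵢ`, whose associated
graded algebra is isomorphic to `A₀`: there are `ℂ`-linear isomorphisms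
`Fₙ B / F_{n−1} B ≃ (A₀)ₙ` compatible with multiplication. -/
theorem stmt6 {A₀ A B : Type} [Ring A₀] [Algebra ℂ A₀] [Ring A] [Algebra ℂ A]
    [Ring B] [Algebra ℂ B]
    [Algebra (Polynomial ℂ) A] [IsScalarTower ℂ (Polynomial ℂ) A]
    (𝒜₀ : ℤ → Submodule ℂ A₀) [GradedAlgebra 𝒜₀]
    (hpos : ∀ i : ℤ, i < 0 → 𝒜₀ i = ⊥)
    (𝒜 : ℤ → Submodule ℂ A) [GradedAlgebra 𝒜]
    (ht : algebraMap (Polynomial ℂ) A Polynomial.X ∈ 𝒜 1)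
    (hflat : Module.Flat (Polynomial ℂ) A)
    (p : A →ₐ[ℂ] A₀) (hp : Function.Surjective p)
    (hkerp : ∀ a : A, p a = 0 ↔
      ∃ c : A, a = algebraMap (Polynomial ℂ) A Polynomial.X * c)
    (hgr : ∀ i : ℤ, Submodule.map p.toLinearMap (𝒜 i) = 𝒜₀ i)
    (π : A →ₐ[ℂ] B) (hπ : Function.Surjective π)
    (hkerπ : ∀ a : A, π a = 0 ↔
      ∃ c : A, a = (algebraMap (Polynomial ℂ) A Polynomial.X - 1) * c) :
    ∃ e : ∀ n : ℤ,
        ((filtDeg 𝒜 π n) ⧸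
          ((filtDeg 𝒜 π (n - 1)).comap (filtDeg 𝒜 π n).subtype)) ≃ₗ[ℂ] 𝒜₀ n,
      ∀ (m n : ℤ) (x : filtDeg 𝒜 π m) (y : filtDeg 𝒜 π n)
        (hxy : (x : B) * (y : B) ∈ filtDeg 𝒜 π (m + n)),
        (e (m + n) (Submodule.Quotient.mk ⟨(x : B) * (y : B), hxy⟩) : A₀) =
          (e m (Submodule.Quotient.mk x) : A₀) * (e n (Submodule.Quotient.mk y) : A₀) :=
  stmt6_general 𝒜₀ 𝒜 ht hflat p hkerp hgr π hkerπ
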